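/- Let α0 : A → M(B) satisfy the absorption property: for every completely positive contraction φ : A → B there exist W_n ∈ M(B) with W_n* b → 0 for all b ∈ B and W_n* α0(a) W_n → φ(a) for all a ∈ A. Suppose B is stable, i.e., there is a sequence of isometries S_n ∈ M(B) with S_n* b → 0 for all b ∈ B. Then for every completely positive contraction ψ : A ⊕ ℂ → B, setting T_n = V1 W_n + V2 S_n ψ(0,1)^{1/2} (where W_n is chosen for the c.p. contraction a ↦ ψ(a,0)), one has T_n* b → 0 for all b ∈ B and T_n* (V1 α0(a) V1* + λ V2 V2*) T_n → ψ(a, λ) for all (a,λ) ∈ A ⊕ ℂ. -/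

import Mathlib

open scoped MultiplierAlgebra
open Filter Topology

section

variable {X Y : Type*} [NonUnitalCStarAlgebra X] [NonUnitalCStarAlgebra Y]

/-- A completely positive contraction: a linear map of norm at most `1` mapping positive
matrices (of every size) to positive matrices, positivity being expressed by factorizations
`x = y* y`. -/
def IsCPC (φ : X →ₗ[ℂ] Y) : Prop :=
  (∀ x, ‖φ x‖ ≤ ‖x‖) ∧
  ∀ (n : ℕ) (x : Matrix (Fin n) (Fin n) X),
    (∃ y : Matrix (Fin n) (Fin n) X, x = star y * y) → ∃ z : Matrix (Fin n) (Fin n) Y, x.map (⇑φ) = star z * z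

end

/-!
Write `Tₙ = V₁ Wₙ + V₂ (Sₙ s)` with `s = ψ(0,1)^{1/2}`. Since `V₁, V₂` are isometries with
orthogonal ranges, compressing `V₁ α₀(a) V₁* + λ V₂V₂*` by `Tₙ` gives
`Wₙ* α₀(a) Wₙ + λ s Sₙ* Sₙ s = Wₙ* α₀(a) Wₙ + λ ψ(0,1)`, which tends to `ψ(a,0) + λ ψ(0,1)`.
The condition `Tₙ* b → 0` survives sums and multiplication by multipliers on either side,
because `B` is an ideal of its multiplier algebra: `m b = L_m(b)`.
-/

namespace DoubleCentralizer

variable {𝕜 A : Type*} [NontriviallyNormedField 𝕜] [NonUnitalNormedRing A] [NormedSpace 𝕜 A]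
  [SMulCommClass 𝕜 A A] [IsScalarTower 𝕜 A A] [StarRing A] [CStarRing A]

/-- In a C⋆-algebra, `y * (L (b * x) - L b * x) = 0` for all `y` by centrality, so the
difference vanishes: take `y` to be its adjoint. -/
lemma fst_mul (a : 𝓜(𝕜, A)) (b x : A) : a.fst (b * x) = a.fst b * x := by
  have hzero : ∀ y : A, y * (a.fst (b * x) - a.fst b * x) = 0 := fun y => by
    rw [mul_sub, ← a.central, ← mul_assoc, a.central, mul_assoc, sub_self]
  exact sub_eq_zero.mp <| CStarRing.star_mul_self_eq_zero_iff _ |>.mp <| hzero _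

lemma mul_coe (a : 𝓜(𝕜, A)) (b : A) :
    a * DoubleCentralizer.coe 𝕜 b = DoubleCentralizer.coe 𝕜 (a.fst b) :=
  DoubleCentralizer.ext 𝕜 A _ _ <| Prod.ext (ContinuousLinearMap.ext fun x => fst_mul a b x)
    (ContinuousLinearMap.ext fun x => a.central x b)

end DoubleCentralizer

lemma star_mul_blockDiag_mul {𝕜 R : Type*} [CommSemiring 𝕜] [Semiring R] [StarRing R]
    [Algebra 𝕜 R] {V₁ V₂ : R} (h₁ : star V₁ * V₁ = 1) (h₂ : star V₂ * V₂ = 1)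
    (horth : star V₁ * V₂ = 0) (w u x : R) (r : 𝕜) :
    star (V₁ * w + V₂ * u) * (V₁ * x * star V₁ + r • (V₂ * star V₂)) * (V₁ * w + V₂ * u) =
      star w * x * w + r • (star u * u) := by
  have horth' : star V₂ * V₁ = 0 := by simpa using congrArg star horth
  simp only [star_add, star_mul, add_mul, mul_add, smul_mul_assoc, mul_smul_comm, ← mul_assoc]
  simp only [mul_assoc _ (star V₁) V₁, mul_assoc _ (star V₁) V₂, mul_assoc _ (star V₂) V₁,
    mul_assoc _ (star V₂) V₂, h₁, h₂, horth, horth', mul_one, mul_zero, zero_mul, smul_zero,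
    add_zero, zero_add]

section

variable {B ι : Type*} [NonUnitalCStarAlgebra B]

def StarMulTendstoZero (l : Filter ι) (W : ι → 𝓜(ℂ, B)) : Prop :=
  ∀ b : B, Tendsto (fun i => star (W i) * DoubleCentralizer.coeHom (𝕜 := ℂ) b) l (𝓝 0)

namespace StarMulTendstoZero

variable {l : Filter ι} {W W' : ι → 𝓜(ℂ, B)}

lemma mul_left (hW : StarMulTendstoZero l W) (m : 𝓜(ℂ, B)) :
    StarMulTendstoZero l (fun i => m * W i) := fun b => by
  simpa only [star_mul, mul_assoc, DoubleCentralizer.coeHom_apply, DoubleCentralizer.mul_coe]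
    using hW ((star m).fst b)

lemma mul_right (hW : StarMulTendstoZero l W) (m : 𝓜(ℂ, B)) :
    StarMulTendstoZero l (fun i => W i * m) := fun b => by
  simpa only [star_mul, mul_assoc, mul_zero] using (hW b).const_mul (star m)

lemma add (hW : StarMulTendstoZero l W) (hW' : StarMulTendstoZero l W') :
    StarMulTendstoZero l (fun i => W i + W' i) := fun b => by
  simpa only [star_add, add_mul, add_zero] using (hW b).add (hW' b)

end StarMulTendstoZero

end

theorem stmt_12_general (A B : Type*) [CStarAlgebra A] [NonUnitalCStarAlgebra B]
    [PartialOrder B] [StarOrderedRing B]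
    (V₁ V₂ : 𝓜(ℂ, B)) (h₁ : star V₁ * V₁ = 1) (h₂ : star V₂ * V₂ = 1)
    (horth : star V₁ * V₂ = 0)
    (α₀ : A →⋆ₙₐ[ℂ] 𝓜(ℂ, B))
    (S : ℕ → 𝓜(ℂ, B)) (hSiso : ∀ n, star (S n) * S n = 1)
    (hS : ∀ b : B, Tendsto (fun n => star (S n) * DoubleCentralizer.coeHom (𝕜 := ℂ) b)
      atTop (𝓝 0))
    (ψ : A × ℂ →ₗ[ℂ] B)
    (W : ℕ → 𝓜(ℂ, B))
    (hW₁ : ∀ b : B, Tendsto (fun n => star (W n) * DoubleCentralizer.coeHom (𝕜 := ℂ) b)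
      atTop (𝓝 0))
    (hW₂ : ∀ a : A, Tendsto (fun n => star (W n) * α₀ a * W n)
      atTop (𝓝 (DoubleCentralizer.coeHom (𝕜 := ℂ) (ψ (a, 0)))))
    (s : B) (hs₀ : 0 ≤ s) (hs : s * s = ψ (0, 1))
    (T : ℕ → 𝓜(ℂ, B))
    (hT : ∀ n, T n = V₁ * W n + V₂ * S n * DoubleCentralizer.coeHom (𝕜 := ℂ) s) :
    (∀ b : B, Tendsto (fun n => star (T n) * DoubleCentralizer.coeHom (𝕜 := ℂ) b)
      atTop (𝓝 0)) ∧
    ∀ (a : A) (lam : ℂ),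
      Tendsto (fun n => star (T n) * (V₁ * α₀ a * star V₁ + lam • (V₂ * star V₂)) * T n)
        atTop (𝓝 (DoubleCentralizer.coeHom (𝕜 := ℂ) (ψ (a, lam)))) := by
  have hs_star : star (DoubleCentralizer.coeHom (𝕜 := ℂ) s) = DoubleCentralizer.coeHom s := by
    rw [← map_star, (IsSelfAdjoint.of_nonneg hs₀).star_eq]
  have hT' : T = fun n => V₁ * W n + V₂ * (S n * DoubleCentralizer.coeHom (𝕜 := ℂ) s) :=
    funext fun n => by rw [hT, mul_assoc]
  refine ⟨?_, fun a lam => ?_⟩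
  · rw [hT']
    exact (StarMulTendstoZero.mul_left hW₁ V₁).add
      ((StarMulTendstoZero.mul_right hS _).mul_left V₂)
  · have hcompress : ∀ n, star (T n) * (V₁ * α₀ a * star V₁ + lam • (V₂ * star V₂)) * T n =
        star (W n) * α₀ a * W n + lam • DoubleCentralizer.coeHom (𝕜 := ℂ) (ψ (0, 1)) := by
      intro n
      have hSs : star (S n * DoubleCentralizer.coeHom s) * (S n * DoubleCentralizer.coeHom s) =
          DoubleCentralizer.coeHom (𝕜 := ℂ) (s * s) := by
        rw [star_mul, hs_star, mul_assoc, ← mul_assoc (star (S n)), hSiso, one_mul, map_mul]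
      rw [hT', star_mul_blockDiag_mul h₁ h₂ horth, hSs, hs]
    have hψ_split : ψ (a, lam) = ψ (a, 0) + lam • ψ (0, 1) := by
      rw [← map_smul, ← map_add]
      simp
    rw [funext hcompress, hψ_split, map_add, map_smul]
    exact (hW₂ a).add_const _

/-- Let `A` be a unital separable C*-algebra, `B` a stable separable C*-algebra, and
`V₁, V₂` isometries in `𝓜(ℂ, B)` with `V₁V₁* + V₂V₂* = 1` and `V₁*V₂ = 0`.  Let
`α₀ : A → 𝓜(ℂ, B)` satisfy the absorption property: for every completely positive
contraction `φ : A → B` there exist `Wₙ ∈ 𝓜(ℂ, B)` with `Wₙ* b → 0` for all `b ∈ B` and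
`Wₙ* α₀(a) Wₙ → φ(a)` for all `a ∈ A`.  Suppose `B` is stable: there is a sequence of
isometries `Sₙ ∈ 𝓜(ℂ, B)` with `Sₙ* b → 0` for all `b ∈ B`.  Then for every completely
positive contraction `ψ : A ⊕ ℂ → B`, setting `Tₙ = V₁ Wₙ + V₂ Sₙ ψ(0,1)^{1/2}` (where the
`Wₙ` are chosen for the c.p. contraction `a ↦ ψ(a,0)`), one has `Tₙ* b → 0` for all `b ∈ B`
and `Tₙ* (V₁ α₀(a) V₁* + λ V₂V₂*) Tₙ → ψ(a, λ)` for all `(a, λ) ∈ A ⊕ ℂ`. -/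
theorem stmt_12 (A B : Type*) [CStarAlgebra A] [NonUnitalCStarAlgebra B]
    [PartialOrder B] [StarOrderedRing B]
    [TopologicalSpace.SeparableSpace A] [TopologicalSpace.SeparableSpace B]
    (V₁ V₂ : 𝓜(ℂ, B)) (h₁ : star V₁ * V₁ = 1) (h₂ : star V₂ * V₂ = 1)
    (hsum : V₁ * star V₁ + V₂ * star V₂ = 1) (horth : star V₁ * V₂ = 0)
    (α₀ : A →⋆ₙₐ[ℂ] 𝓜(ℂ, B))
    (habs : ∀ φ : A →ₗ[ℂ] B, IsCPC φ → ∃ W : ℕ → 𝓜(ℂ, B),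
      (∀ b : B, Tendsto (fun n => star (W n) * DoubleCentralizer.coeHom (𝕜 := ℂ) b)
        atTop (𝓝 0)) ∧
      (∀ a : A, Tendsto (fun n => star (W n) * α₀ a * W n)
        atTop (𝓝 (DoubleCentralizer.coeHom (𝕜 := ℂ) (φ a)))))
    (S : ℕ → 𝓜(ℂ, B)) (hSiso : ∀ n, star (S n) * S n = 1)
    (hS : ∀ b : B, Tendsto (fun n => star (S n) * DoubleCentralizer.coeHom (𝕜 := ℂ) b)
      atTop (𝓝 0))
    (ψ : A × ℂ →ₗ[ℂ] B) (hψ : IsCPC ψ)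
    (W : ℕ → 𝓜(ℂ, B))
    (hW₁ : ∀ b : B, Tendsto (fun n => star (W n) * DoubleCentralizer.coeHom (𝕜 := ℂ) b)
      atTop (𝓝 0))
    (hW₂ : ∀ a : A, Tendsto (fun n => star (W n) * α₀ a * W n)
      atTop (𝓝 (DoubleCentralizer.coeHom (𝕜 := ℂ) (ψ (a, 0)))))
    (s : B) (hs₀ : 0 ≤ s) (hs : s * s = ψ (0, 1))
    (T : ℕ → 𝓜(ℂ, B))
    (hT : ∀ n, T n = V₁ * W n + V₂ * S n * DoubleCentralizer.coeHom (𝕜 := ℂ) s) :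
    (∀ b : B, Tendsto (fun n => star (T n) * DoubleCentralizer.coeHom (𝕜 := ℂ) b)
      atTop (𝓝 0)) ∧
    ∀ (a : A) (lam : ℂ),
      Tendsto (fun n => star (T n) * (V₁ * α₀ a * star V₁ + lam • (V₂ * star V₂)) * T n)
        atTop (𝓝 (DoubleCentralizer.coeHom (𝕜 := ℂ) (ψ (a, lam)))) :=
  stmt_12_general A B V₁ V₂ h₁ h₂ horth α₀ S hSiso hS ψ W hW₁ hW₂ s hs₀ hs T hT
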